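/- For nonzero X, Y ∈ ℝ^{M×N} with K_X = X Xᵀ, K_Y = Y Yᵀ, the normalized Bures similarity ℱ(K_X, K_Y)/√(Tr[K_X] Tr[K_Y]) equals the maximum over orthogonal Q ∈ O(N) of Tr[Xᵀ Y Q]/√(Tr[Xᵀ X] Tr[Yᵀ Y]) (the cosine of the Riemannian shape distance). -/

import Mathlib

open Matrix

lemma real_conjTranspose_eq {m n : ℕ} (A : Matrix (Fin m) (Fin n) ℝ) : Aᴴ = Aᵀ := rfl

lemma psd_tmul {m n : ℕ} (A : Matrix (Fin m) (Fin n) ℝ) : (Aᵀ * A).PosSemidef := by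
  have h := Matrix.posSemidef_conjTranspose_mul_self A
  rwa [real_conjTranspose_eq] at h

lemma psd_gram {m n : ℕ} (A : Matrix (Fin m) (Fin n) ℝ) : (A * Aᵀ).PosSemidef := by
  have h := Matrix.posSemidef_self_mul_conjTranspose A
  rwa [real_conjTranspose_eq] at h

namespace Matrix.PosSemidef

open scoped ComplexOrder

/-- The square root of a positive semidefinite matrix (definition removed from Mathlib;
restored here verbatim from the older Mathlib). -/
noncomputable def sqrt {n 𝕜 : Type*} [Fintype n] [RCLike 𝕜] [DecidableEq n] {A : Matrix n n 𝕜}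
    (hA : PosSemidef A) : Matrix n n 𝕜 :=
  hA.1.eigenvectorUnitary.1 * diagonal ((↑) ∘ (√·) ∘ hA.1.eigenvalues) *
    (star hA.1.eigenvectorUnitary : Matrix n n 𝕜)

lemma posSemidef_sqrt {n 𝕜 : Type*} [Fintype n] [RCLike 𝕜] [DecidableEq n] {A : Matrix n n 𝕜}
    (hA : PosSemidef A) : PosSemidef hA.sqrt := by
  have hd : PosSemidef (diagonal ((↑) ∘ (√·) ∘ hA.1.eigenvalues : n → 𝕜)) :=
    posSemidef_diagonal_iff.mpr fun i => by
      simp only [Function.comp_apply]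
      exact_mod_cast Real.sqrt_nonneg _
  have h := hd.mul_mul_conjTranspose_same (hA.1.eigenvectorUnitary : Matrix n n 𝕜)
  unfold sqrt
  simpa [Matrix.star_eq_conjTranspose] using h

end Matrix.PosSemidef

lemma psd_sand {M : ℕ} {Kx Ky : Matrix (Fin M) (Fin M) ℝ} (hx : Kx.PosSemidef) (hy : Ky.PosSemidef) :
    (hx.sqrt * Ky * hx.sqrt).PosSemidef := by
  have h := hy.mul_mul_conjTranspose_same hx.sqrt
  rwa [hx.posSemidef_sqrt.isHermitian.eq] at h

/-- Nuclear norm: sum of singular values, i.e. `Tr[(AᵀA)^{1/2}]`. -/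
noncomputable def nuclearNorm {m n : ℕ} (A : Matrix (Fin m) (Fin n) ℝ) : ℝ :=
  (Matrix.PosSemidef.sqrt (psd_tmul A)).trace

/-- Frobenius norm. -/
noncomputable def frobNorm {m n : ℕ} (A : Matrix (Fin m) (Fin n) ℝ) : ℝ :=
  Real.sqrt (Matrix.trace (Aᵀ * A))

/-- Fidelity `Tr[(Kx^{1/2} Ky Kx^{1/2})^{1/2}]` between PSD matrices. -/
noncomputable def fidelity {M : ℕ} {Kx Ky : Matrix (Fin M) (Fin M) ℝ}
    (hx : Kx.PosSemidef) (hy : Ky.PosSemidef) : ℝ :=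
  (Matrix.PosSemidef.sqrt (psd_sand hx hy)).trace

open scoped MatrixOrder ComplexOrder

/-!
Put `A = Xᵀ Y` and `S = K_X^{1/2}`. The matrix `B = S Y` has `B Bᵀ = S K_Y S` and
`Bᵀ B = Yᵀ K_X Y = Aᵀ A`, and `B Bᵀ`, `Bᵀ B` have the same nonzero eigenvalues, so the fidelity is
the nuclear norm `Tr[(Aᵀ A)^{1/2}]` of `A`. Diagonalizing `Aᵀ A = V diag(d) Vᵀ`, the columns of
`A V` are orthogonal with lengths `√dⱼ`. Column-wise Cauchy–Schwarz bounds `Tr[A Q]` by `∑ √dⱼ` for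
orthogonal `Q`, with equality for `Q = V Rᵀ` where the columns of `R` complete the normalized
nonzero columns of `A V` to an orthonormal basis. The normalizations agree as `Tr[Xᵀ X] = Tr[X Xᵀ]`.
-/

namespace Matrix.PosSemidef

variable {n 𝕜 : Type*} [Fintype n] [DecidableEq n] [RCLike 𝕜] {A B : Matrix n n 𝕜}

lemma sqrt_eq_cfcSqrt (hA : A.PosSemidef) : hA.sqrt = CFC.sqrt A := by
  rw [CFC.sqrt_eq_real_sqrt A hA.nonneg, cfcₙ_eq_cfc, hA.1.cfc_eq]
  rfl

lemma sqrt_mul_sqrt (hA : A.PosSemidef) : hA.sqrt * hA.sqrt = A := by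
  rw [hA.sqrt_eq_cfcSqrt]
  exact CFC.sqrt_mul_sqrt_self A hA.nonneg

lemma eq_sqrt_of_mul_self_eq (hB : B.PosSemidef) (hA : A.PosSemidef) (h : B * B = A) :
    B = hA.sqrt := by
  rw [hA.sqrt_eq_cfcSqrt]
  exact (CFC.sqrt_unique h hB.nonneg).symm

lemma trace_sqrt {A : Matrix n n ℝ} (hA : A.PosSemidef) :
    hA.sqrt.trace = ∑ i, √(hA.1.eigenvalues i) := by
  rw [sqrt, trace_mul_cycle, Unitary.coe_star_mul_self, one_mul, trace_diagonal]
  rfl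

end Matrix.PosSemidef

section OrthogonalColumns

variable {m n : Type*} [Fintype m]

lemma trace_transpose_mul_eq_sum_inner [Fintype n] (R C : Matrix m n ℝ) :
    trace (Rᵀ * C) = ∑ j, inner ℝ (WithLp.toLp 2 (Rᵀ j)) (WithLp.toLp 2 (Cᵀ j)) := by
  simp [trace, mul_apply, PiLp.inner_apply, mul_comm]

variable [DecidableEq n] {C : Matrix m n ℝ} {d : n → ℝ}

lemma sum_sq_col_eq_of_transpose_mul_eq_diagonal (h : Cᵀ * C = diagonal d) (j : n) :
    ∑ i, C i j ^ 2 = d j := by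
  simpa [mul_apply, sq] using congrFun (congrFun h j) j

lemma norm_col_eq_sqrt_of_transpose_mul_eq_diagonal (h : Cᵀ * C = diagonal d) (j : n) :
    ‖WithLp.toLp 2 (Cᵀ j)‖ = √(d j) := by
  rw [EuclideanSpace.norm_eq, ← sum_sq_col_eq_of_transpose_mul_eq_diagonal h j]
  simp

lemma col_eq_zero_of_transpose_mul_eq_diagonal (h : Cᵀ * C = diagonal d) {j : n} (hj : d j = 0)
    (i : m) : C i j = 0 := by
  rw [← sum_sq_col_eq_of_transpose_mul_eq_diagonal h,
    Finset.sum_eq_zero_iff_of_nonneg fun _ _ ↦ sq_nonneg _] at hj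
  exact pow_eq_zero_iff two_ne_zero |>.mp (hj i (Finset.mem_univ i))

variable [Fintype n]

lemma trace_transpose_mul_le_of_transpose_mul_eq_diagonal {R : Matrix m n ℝ} (hR : Rᵀ * R = 1)
    (h : Cᵀ * C = diagonal d) : trace (Rᵀ * C) ≤ ∑ j, √(d j) := by
  rw [trace_transpose_mul_eq_sum_inner]
  refine Finset.sum_le_sum fun j _ ↦ (real_inner_le_norm _ _).trans_eq ?_
  rw [norm_col_eq_sqrt_of_transpose_mul_eq_diagonal (hR.trans diagonal_one.symm),
    norm_col_eq_sqrt_of_transpose_mul_eq_diagonal h, Real.sqrt_one, one_mul]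

lemma trace_sqrt_mul_transpose_of_transpose_mul_eq_diagonal [DecidableEq m]
    (h : Cᵀ * C = diagonal d) (hC : (C * Cᵀ).PosSemidef) : hC.sqrt.trace = ∑ j, √(d j) := by
  set g : n → ℝ := fun j ↦ (√(d j))⁻¹
  have hd : 0 ≤ d := fun j ↦ by
    rw [← sum_sq_col_eq_of_transpose_mul_eq_diagonal h]; positivity
  have hg : (diagonal g).PosSemidef := posSemidef_diagonal_iff.mpr fun j ↦ by positivity
  -- `C diag(1/√d) Cᵀ` squares to `C Cᵀ`: here `1/√0 = 0`, and the columns with `d j = 0` vanish.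
  have hCg : (C * diagonal fun j ↦ g j * d j * g j) = C := by
    ext i j
    rw [mul_diagonal]
    by_cases hj : d j = 0
    · rw [col_eq_zero_of_transpose_mul_eq_diagonal h hj, zero_mul]
    · have hs : √(d j) ≠ 0 := (Real.sqrt_pos.mpr ((hd j).lt_of_ne' hj)).ne'
      have : g j * d j * g j = 1 := by
        simp only [g]
        field_simp
        exact (Real.sq_sqrt (hd j)).symm
      rw [this, mul_one]
  have hsq : C * diagonal g * Cᵀ * (C * diagonal g * Cᵀ) = C * Cᵀ := by
    calc _ = C * (diagonal g * (Cᵀ * C) * diagonal g) * Cᵀ := by simp only [Matrix.mul_assoc]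
      _ = C * Cᵀ := by rw [h, diagonal_mul_diagonal, diagonal_mul_diagonal, hCg]
  have hB : (C * diagonal g * Cᵀ).PosSemidef := by simpa using hg.mul_mul_conjTranspose_same C
  rw [← hB.eq_sqrt_of_mul_self_eq hC hsq,
    trace_mul_cycle, h, diagonal_mul_diagonal, trace_diagonal]
  exact Finset.sum_congr rfl fun j _ ↦ by rw [← Real.div_sqrt, div_eq_inv_mul, mul_comm]

end OrthogonalColumns

lemma exists_trace_transpose_mul_eq_of_transpose_mul_eq_diagonal {k : ℕ}
    {C : Matrix (Fin k) (Fin k) ℝ} {d : Fin k → ℝ} (h : Cᵀ * C = diagonal d) :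
    ∃ R : Matrix (Fin k) (Fin k) ℝ, Rᵀ * R = 1 ∧ trace (Rᵀ * C) = ∑ j, √(d j) := by
  set f : Fin k → EuclideanSpace ℝ (Fin k) := fun j ↦ WithLp.toLp 2 (Cᵀ j)
  have hf : Pairwise fun i j ↦ inner ℝ (f i) (f j) = 0 := fun i j hij ↦ by
    have := congrFun (congrFun h j) i
    rw [diagonal_apply_ne _ hij.symm] at this
    simpa [f, PiLp.inner_apply, mul_apply, mul_comm] using this
  -- `b` extends the normalized nonzero columns of `C`; the columns of `R` are the vectors of `b`
  set b := InnerProductSpace.gramSchmidtOrthonormalBasis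
    (finrank_euclideanSpace (𝕜 := ℝ) (ι := Fin k)) f
  refine ⟨(EuclideanSpace.basisFun (Fin k) ℝ).toBasis.toMatrix b,
    (EuclideanSpace.basisFun (Fin k) ℝ).toMatrix_orthonormalBasis_conjTranspose_mul_self b, ?_⟩
  rw [trace_transpose_mul_eq_sum_inner]
  refine Finset.sum_congr rfl fun j _ ↦ ?_
  rw [← norm_col_eq_sqrt_of_transpose_mul_eq_diagonal h]
  change inner ℝ (b j) (f j) = ‖f j‖
  by_cases hj : f j = 0
  · rw [hj, inner_zero_right, norm_zero]
  · rw [InnerProductSpace.gramSchmidtOrthonormalBasis_apply_of_orthogonal _ hf hj,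
      real_inner_smul_left, real_inner_self_eq_norm_sq, RCLike.ofReal_real_eq_id, id]
    field_simp

section EigenvectorUnitary

variable {n : Type*} [Fintype n] [DecidableEq n]

lemma Matrix.IsHermitian.eigenvectorUnitary_transpose_mul_self {A : Matrix n n ℝ}
    (hA : A.IsHermitian) :
    (hA.eigenvectorUnitary : Matrix n n ℝ)ᵀ * (hA.eigenvectorUnitary : Matrix n n ℝ) = 1 :=
  mem_unitaryGroup_iff'.mp hA.eigenvectorUnitary.2

lemma Matrix.IsHermitian.eigenvectorUnitary_mul_transpose_self {A : Matrix n n ℝ}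
    (hA : A.IsHermitian) :
    (hA.eigenvectorUnitary : Matrix n n ℝ) * (hA.eigenvectorUnitary : Matrix n n ℝ)ᵀ = 1 :=
  mem_unitaryGroup_iff.mp hA.eigenvectorUnitary.2

lemma Matrix.IsHermitian.transpose_mul_self_mul_eigenvectorUnitary {m : Type*} [Fintype m]
    {P : Matrix m n ℝ} (hP : (Pᵀ * P).IsHermitian) :
    (P * (hP.eigenvectorUnitary : Matrix n n ℝ))ᵀ * (P * (hP.eigenvectorUnitary : Matrix n n ℝ)) =
      diagonal hP.eigenvalues := by
  have := hP.conjStarAlgAut_star_eigenvectorUnitary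
  rw [Unitary.conjStarAlgAut_apply] at this
  simpa [Matrix.mul_assoc, Matrix.star_eq_conjTranspose] using this

end EigenvectorUnitary

section NuclearNorm

variable {m n : ℕ}

lemma nuclearNorm_eq_of_transpose_mul_self_eq {k : ℕ} {A : Matrix (Fin m) (Fin n) ℝ}
    {B : Matrix (Fin k) (Fin n) ℝ} (h : Bᵀ * B = Aᵀ * A) : nuclearNorm B = nuclearNorm A := by
  unfold nuclearNorm
  congr 2

lemma trace_sqrt_mul_transpose_eq_nuclearNorm (B : Matrix (Fin m) (Fin n) ℝ) :
    (psd_gram B).sqrt.trace = nuclearNorm B := by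
  set hB := (psd_tmul B).1
  set V : Matrix (Fin n) (Fin n) ℝ := ↑hB.eigenvectorUnitary
  have hBV : B * V * (B * V)ᵀ = B * Bᵀ := by
    rw [transpose_mul, Matrix.mul_assoc, ← Matrix.mul_assoc V,
      hB.eigenvectorUnitary_mul_transpose_self, Matrix.one_mul]
  rw [nuclearNorm, (psd_tmul B).trace_sqrt, ← trace_sqrt_mul_transpose_of_transpose_mul_eq_diagonal
    hB.transpose_mul_self_mul_eigenvectorUnitary (psd_gram (B * V))]
  congr 2
  exact hBV.symm

lemma fidelity_gram_eq_nuclearNorm (X Y : Matrix (Fin m) (Fin n) ℝ) :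
    fidelity (psd_gram X) (psd_gram Y) = nuclearNorm (Xᵀ * Y) := by
  set S := (psd_gram X).sqrt
  have hS : Sᵀ = S := (psd_gram X).posSemidef_sqrt.isHermitian.eq
  have hSS : S * S = X * Xᵀ := (psd_gram X).sqrt_mul_sqrt
  have hsand : S * (Y * Yᵀ) * S = S * Y * (S * Y)ᵀ := by
    rw [transpose_mul, hS]
    simp only [Matrix.mul_assoc]
  have hgram : (S * Y)ᵀ * (S * Y) = (Xᵀ * Y)ᵀ * (Xᵀ * Y) := by
    calc (S * Y)ᵀ * (S * Y) = Yᵀ * (S * S) * Y := by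
          rw [transpose_mul, hS]; simp only [Matrix.mul_assoc]
      _ = (Xᵀ * Y)ᵀ * (Xᵀ * Y) := by
          rw [hSS, transpose_mul, transpose_transpose]; simp only [Matrix.mul_assoc]
  rw [fidelity, ← nuclearNorm_eq_of_transpose_mul_self_eq hgram,
    ← trace_sqrt_mul_transpose_eq_nuclearNorm]
  congr 2

theorem isGreatest_trace_mul_orthogonal_nuclearNorm (A : Matrix (Fin n) (Fin n) ℝ) :
    IsGreatest {t | ∃ Q : Matrix (Fin n) (Fin n) ℝ, Qᵀ * Q = 1 ∧ t = trace (A * Q)}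
      (nuclearNorm A) := by
  set hA := (psd_tmul A).1
  set V : Matrix (Fin n) (Fin n) ℝ := ↑hA.eigenvectorUnitary
  have hC := hA.transpose_mul_self_mul_eigenvectorUnitary
  rw [nuclearNorm, (psd_tmul A).trace_sqrt]
  constructor
  · obtain ⟨R, hR, htr⟩ := exists_trace_transpose_mul_eq_of_transpose_mul_eq_diagonal hC
    refine ⟨V * Rᵀ, ?_, ?_⟩
    · rw [transpose_mul, transpose_transpose, Matrix.mul_assoc, ← Matrix.mul_assoc Vᵀ,
        hA.eigenvectorUnitary_transpose_mul_self, Matrix.one_mul, mul_eq_one_comm.mp hR]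
    · rw [← htr, trace_mul_comm, Matrix.mul_assoc]
  · rintro t ⟨Q, hQ, rfl⟩
    have hR : (Qᵀ * V)ᵀ * (Qᵀ * V) = 1 := by
      rw [transpose_mul, transpose_transpose, Matrix.mul_assoc, ← Matrix.mul_assoc Q,
        mul_eq_one_comm.mp hQ, Matrix.one_mul, hA.eigenvectorUnitary_transpose_mul_self]
    calc trace (A * Q) = trace (Q * A * (V * Vᵀ)) := by
          rw [hA.eigenvectorUnitary_mul_transpose_self, Matrix.mul_one, trace_mul_comm]
      _ = trace ((Qᵀ * V)ᵀ * (A * V)) := by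
          simp only [transpose_mul, transpose_transpose, Matrix.mul_assoc]
          rw [trace_mul_comm Vᵀ]
          simp only [Matrix.mul_assoc]
      _ ≤ _ := trace_transpose_mul_le_of_transpose_mul_eq_diagonal hR hC

end NuclearNorm

theorem nbs_eq_cos_riemannian_shape_distance_general (M N : ℕ) (X Y : Matrix (Fin M) (Fin N) ℝ) :
    IsGreatest
      {t : ℝ | ∃ Q : Matrix (Fin N) (Fin N) ℝ, Qᵀ * Q = 1 ∧
        t = Matrix.trace (Xᵀ * Y * Q) /
          Real.sqrt (Matrix.trace (Xᵀ * X) * Matrix.trace (Yᵀ * Y))}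
      (fidelity (psd_gram X) (psd_gram Y) /
        Real.sqrt (Matrix.trace (X * Xᵀ) * Matrix.trace (Y * Yᵀ))) := by
  rw [fidelity_gram_eq_nuclearNorm, trace_mul_comm X, trace_mul_comm Y]
  have h := (monotone_div_right_of_nonneg (Real.sqrt_nonneg
    (trace (Xᵀ * X) * trace (Yᵀ * Y)))).map_isGreatest
    (isGreatest_trace_mul_orthogonal_nuclearNorm (Xᵀ * Y))
  simpa [Set.image, eq_comm] using h

theorem nbs_eq_cos_riemannian_shape_distance (M N : ℕ) (X Y : Matrix (Fin M) (Fin N) ℝ)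
    (hX : Matrix.trace (X * Xᵀ) > 0) (hY : Matrix.trace (Y * Yᵀ) > 0) :
    IsGreatest
      {t : ℝ | ∃ Q : Matrix (Fin N) (Fin N) ℝ, Qᵀ * Q = 1 ∧
        t = Matrix.trace (Xᵀ * Y * Q) /
          Real.sqrt (Matrix.trace (Xᵀ * X) * Matrix.trace (Yᵀ * Y))}
      (fidelity (psd_gram X) (psd_gram Y) /
        Real.sqrt (Matrix.trace (X * Xᵀ) * Matrix.trace (Y * Yᵀ))) :=
  nbs_eq_cos_riemannian_shape_distance_general M N X Y
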